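/- arXiv:math/0006208 — 2 statements merged into one kernel-verified Lean document; each statement's English description precedes it below -/
import Mathlib

section
/- Let n ≥ 4 be an integer, let P be a partition of {1,…,n} each of whose classes has at least two elements, and for every unordered partition 𝒯 = {T, T^c} of {1,…,n} with |T|, |T^c| ≥ 2 and 𝒯 > P, let e_𝒯 be a rational number with e_𝒯 ≥ −1. Then the element κ_n + Σ_{𝒯 > P} e_𝒯 · δ_T of V_n is an effective boundary class. (This is Lemma 4.4: the divisor κ + Σ_{𝒯 > P} e_𝒯 δ_𝒯 on \bar M_{0,n} is linearly equivalent to an effective sum of boundary divisors whenever each e_𝒯 ≥ −1.) -/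
open Finset

noncomputable section

/-- The free `ℚ`-vector space on the symbols `δ_T`, `T ⊆ {1,…,n}`. -/
abbrev FreeV (n : ℕ) := Finset (Fin n) →₀ ℚ

/-- The defining relations of the vector space `V_n`:
(i) `δ_T = δ_{Tᶜ}`;  (ii) `δ_T = 0` for `|T| ≤ 1`;
(iii) for distinct `i, j, k, l`,
`Σ_{i,j ∈ T, k,l ∉ T} δ_T = Σ_{i,k ∈ T, j,l ∉ T} δ_T`. -/
def relSet (n : ℕ) : Set (FreeV n) :=
  {x | (∃ T : Finset (Fin n), x = Finsupp.single T 1 - Finsupp.single Tᶜ 1) ∨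
       (∃ T : Finset (Fin n), T.card ≤ 1 ∧ x = Finsupp.single T 1) ∨
       (∃ i j k l : Fin n,
         (i ≠ j ∧ i ≠ k ∧ i ≠ l ∧ j ≠ k ∧ j ≠ l ∧ k ≠ l) ∧
         x = (∑ T ∈ univ.filter
                (fun T : Finset (Fin n) => i ∈ T ∧ j ∈ T ∧ k ∉ T ∧ l ∉ T),
                Finsupp.single T (1 : ℚ)) -
             ∑ T ∈ univ.filter
                (fun T : Finset (Fin n) => i ∈ T ∧ k ∈ T ∧ j ∉ T ∧ l ∉ T),
                Finsupp.single T (1 : ℚ))}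

/-- The submodule of relations. -/
def relSub (n : ℕ) : Submodule ℚ (FreeV n) := Submodule.span ℚ (relSet n)

/-- The `ℚ`-vector space `V_n` spanned by the symbols `δ_T`, `T ⊆ {1,…,n}`,
modulo the relations (i)–(iii); this is the `ℚ`-Picard group of `\bar M_{0,n}`. -/
abbrev V (n : ℕ) := FreeV n ⧸ relSub n

/-- The boundary class `δ_T ∈ V_n`. -/
def delta {n : ℕ} (T : Finset (Fin n)) : V n :=
  Submodule.Quotient.mk (Finsupp.single T 1)

/-- An element of `V_n` is an *effective boundary class* if it is a linear
combination of the classes `δ_T` with nonnegative rational coefficients. -/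
def IsEffectiveBoundary {n : ℕ} (x : V n) : Prop :=
  ∃ c : Finset (Fin n) → ℚ, (∀ T, 0 ≤ c T) ∧
    x = ∑ T : Finset (Fin n), c T • delta T

/-- The tautological class `κ` on `\bar M_{0,n}` expanded in boundary divisors:
`κ_n = Σ (|T|(n−|T|)/(n−1) − 1) δ_T`, the sum over unordered partitions
`{T, Tᶜ}` of `{1,…,n}` with `|T|, |Tᶜ| ≥ 2`, each counted once.  (Since the
coefficient is invariant under `T ↦ Tᶜ`, this equals half the sum over all
such ordered `T`.) -/
def kappa (n : ℕ) : V n :=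
  (1 / 2 : ℚ) • ∑ T ∈ univ.filter
      (fun T : Finset (Fin n) => 2 ≤ T.card ∧ 2 ≤ Tᶜ.card),
    ((((T.card : ℚ) * ((n : ℚ) - (T.card : ℚ))) / ((n : ℚ) - 1)) - 1) • delta T

/-!
For distinct `a, b ≠ i` the class `ψ_i = Σ_{i ∈ T, a, b ∉ T} δ_T` does not depend on `a, b`
(relation (iii)), and `κ = Σ_i ψ_i - Σ_{{T, Tᶜ}} δ_T`. Averaging each `ψ_i` over a weight on the
pairs `(a, b)` writes `Σ_i ψ_i = Σ_T c_T δ_T`, where `c_T` is the weight of the triples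
`(i, a, b)` with `i ∈ T` and `a, b ∉ T`. Taking `(a, b)` uniformly with probability `3/4`, and
otherwise `a` uniformly outside the class of `i` in `P` and `b` a fixed partner of `a` in its own
class, gives `c_T + c_{Tᶜ} ≥ 1` for every `T` and `c_T + c_{Tᶜ} ≥ 2` for `𝒯 > P`. Since
`e_𝒯 ≥ -1`, all coefficients of `κ + Σ e_𝒯 δ_𝒯` are then nonnegative.
-/

section Relations

variable {n : ℕ}

lemma delta_compl (T : Finset (Fin n)) : delta Tᶜ = delta T :=
  ((Submodule.Quotient.eq (relSub n)).2 (Submodule.subset_span (Or.inl ⟨T, rfl⟩))).symm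

lemma delta_eq_zero_of_card_le_one {T : Finset (Fin n)} (h : T.card ≤ 1) : delta T = 0 :=
  (Submodule.Quotient.mk_eq_zero _).2 (Submodule.subset_span (Or.inr (Or.inl ⟨T, h, rfl⟩)))

lemma delta_eq_zero_of_card_compl_le_one {T : Finset (Fin n)} (h : Tᶜ.card ≤ 1) :
    delta T = 0 := by
  rw [← delta_compl, delta_eq_zero_of_card_le_one h]

lemma sum_delta_eq_of_pairwise_ne {i j k l : Fin n}
    (h : i ≠ j ∧ i ≠ k ∧ i ≠ l ∧ j ≠ k ∧ j ≠ l ∧ k ≠ l) :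
    ∑ T ∈ univ.filter (fun T : Finset (Fin n) => i ∈ T ∧ j ∈ T ∧ k ∉ T ∧ l ∉ T), delta T =
      ∑ T ∈ univ.filter (fun T : Finset (Fin n) => i ∈ T ∧ k ∈ T ∧ j ∉ T ∧ l ∉ T), delta T := by
  simp only [delta, ← Submodule.mkQ_apply, ← map_sum]
  rw [← sub_eq_zero, ← map_sub, Submodule.mkQ_apply, Submodule.Quotient.mk_eq_zero]
  exact Submodule.subset_span (Or.inr (Or.inr ⟨i, j, k, l, h, rfl⟩))

/-- The class `ψ_i`, expressed through two auxiliary points `a, b`. -/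
def psi (i a b : Fin n) : V n :=
  ∑ T ∈ univ.filter (fun T : Finset (Fin n) => i ∈ T ∧ a ∉ T ∧ b ∉ T), delta T

lemma psi_comm (i a b : Fin n) : psi i a b = psi i b a := by
  simp only [psi, and_comm (a := a ∉ _)]

lemma psi_eq_psi_left {i a b c : Fin n} (ha : a ≠ i) (hb : b ≠ i) (hc : c ≠ i)
    (hab : a ≠ b) (hcb : c ≠ b) : psi i a b = psi i c b := by
  rcases eq_or_ne c a with rfl | hca
  · rfl
  -- the two sides differ by the two sides of relation (iii) for `i, c, a, b`
  rw [← sub_eq_zero, ← sub_eq_zero.2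
    (sum_delta_eq_of_pairwise_ne ⟨hc.symm, ha.symm, hb.symm, hca, hcb, hab⟩)]
  simp only [psi, sum_filter, ← sum_sub_distrib]
  refine sum_congr rfl fun T _ => ?_
  by_cases hiT : i ∈ T <;> by_cases haT : a ∈ T <;> by_cases hbT : b ∈ T <;>
    by_cases hcT : c ∈ T <;> simp [hiT, haT, hbT, hcT]

lemma psi_eq_psi_right {i a b d : Fin n} (ha : a ≠ i) (hb : b ≠ i) (hd : d ≠ i)
    (hab : a ≠ b) (had : a ≠ d) : psi i a b = psi i a d := by
  rw [psi_comm, psi_eq_psi_left hb ha hd hab.symm had.symm, psi_comm]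

lemma psi_eq_psi {i a b c d : Fin n} (ha : a ≠ i) (hb : b ≠ i) (hab : a ≠ b)
    (hc : c ≠ i) (hd : d ≠ i) (hcd : c ≠ d) : psi i a b = psi i c d := by
  rcases eq_or_ne c b with rfl | hcb
  · rw [psi_comm, psi_eq_psi_right hc ha hd hab.symm hcd]
  · rw [psi_eq_psi_left ha hb hc hab hcb, psi_eq_psi_right hc hb hd hcb hcd]

end Relations

section BoundarySums

variable {n : ℕ}

lemma sum_smul_delta_compl (f : Finset (Fin n) → ℚ) :
    ∑ T, f Tᶜ • delta T = ∑ T, f T • delta T :=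
  Fintype.sum_equiv (Equiv.mk compl compl compl_compl compl_compl) _ _
    fun T => by simp [delta_compl]

lemma sum_smul_delta_eq_sum_half_add_compl (f : Finset (Fin n) → ℚ) :
    ∑ T, f T • delta T = ∑ T, ((f T + f Tᶜ) / 2) • delta T := by
  have h : ∀ T : Finset (Fin n), ((f T + f Tᶜ) / 2) • delta T =
      (1 / 2 : ℚ) • (f T • delta T) + (1 / 2 : ℚ) • (f Tᶜ • delta T) := by
    intro T
    rw [smul_smul, smul_smul, ← add_smul]
    ring_nf
  rw [sum_congr rfl fun T _ => h T, sum_add_distrib, ← smul_sum, ← smul_sum,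
    sum_smul_delta_compl, ← add_smul]
  norm_num

lemma sum_smul_delta_congr {f g : Finset (Fin n) → ℚ}
    (h : ∀ T : Finset (Fin n), 2 ≤ T.card → 2 ≤ Tᶜ.card → f T = g T) :
    ∑ T, f T • delta T = ∑ T, g T • delta T := by
  refine sum_congr rfl fun T _ => ?_
  by_cases h1 : 2 ≤ T.card
  · by_cases h2 : 2 ≤ Tᶜ.card
    · rw [h T h1 h2]
    · rw [delta_eq_zero_of_card_compl_le_one (by omega), smul_zero, smul_zero]
  · rw [delta_eq_zero_of_card_le_one (by omega), smul_zero, smul_zero]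

end BoundarySums

section Weights

variable {α : Type*} [Fintype α]

/-- Averaging `psi i a b` against such weights gives back `ψ_i`. -/
def IsPsiFiber (i : α) (f : α → α → ℚ) : Prop :=
  (∀ a b, f a b ≠ 0 → a ≠ i ∧ b ≠ i ∧ a ≠ b) ∧ ∑ a, ∑ b, f a b = 1

lemma IsPsiFiber.add_smul {i : α} {f g : α → α → ℚ} (hf : IsPsiFiber i f)
    (hg : IsPsiFiber i g) {s t : ℚ} (hst : s + t = 1) : IsPsiFiber i (s • f + t • g) := by
  refine ⟨fun a b hab => ?_, ?_⟩
  · by_cases hfab : f a b = 0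
    · refine hg.1 a b fun hgab => hab ?_
      simp [hfab, hgab]
    · exact hf.1 a b hfab
  · simp only [Pi.add_apply, Pi.smul_apply, smul_eq_mul, sum_add_distrib, ← mul_sum, hf.2,
      hg.2]
    linarith

variable [DecidableEq α]

def boundaryCoeff (w : α → α → α → ℚ) (T : Finset α) : ℚ :=
  ∑ i ∈ T, ∑ a ∈ Tᶜ, ∑ b ∈ Tᶜ, w i a b

def uniformWeight (α : Type*) [Fintype α] [DecidableEq α] (i a b : α) : ℚ :=
  if a ≠ i ∧ b ≠ i ∧ a ≠ b then (((Fintype.card α : ℚ) - 1) * ((Fintype.card α : ℚ) - 2))⁻¹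
  else 0

lemma uniformWeight_nonneg (h : 3 ≤ Fintype.card α) (i a b : α) :
    0 ≤ uniformWeight α i a b := by
  have : (3 : ℚ) ≤ Fintype.card α := by exact_mod_cast h
  unfold uniformWeight
  split_ifs
  · have : (0 : ℚ) < ((Fintype.card α : ℚ) - 1) * ((Fintype.card α : ℚ) - 2) := by nlinarith
    positivity
  · rfl

lemma isPsiFiber_uniformWeight (h : 3 ≤ Fintype.card α) (i : α) :
    IsPsiFiber i (uniformWeight α i) := by
  refine ⟨fun a b hab => ?_, ?_⟩
  · by_contra hne
    exact hab (if_neg hne)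
  simp only [uniformWeight]
  rw [← sum_product' (f := fun a b => if a ≠ i ∧ b ≠ i ∧ a ≠ b then
      (((Fintype.card α : ℚ) - 1) * ((Fintype.card α : ℚ) - 2))⁻¹ else 0),
    ← sum_filter, sum_const, nsmul_eq_mul]
  have hpairs : (univ ×ˢ univ).filter (fun x : α × α => x.1 ≠ i ∧ x.2 ≠ i ∧ x.1 ≠ x.2) =
      (univ.erase i).offDiag := by
    ext ⟨a, b⟩
    simp
  have hN : (3 : ℚ) ≤ Fintype.card α := by exact_mod_cast h
  rw [hpairs, offDiag_card, card_erase_of_mem (mem_univ i), card_univ,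
    Nat.cast_sub (Nat.le_mul_self _), Nat.cast_mul, Nat.cast_sub (by omega)]
  have hne : ((Fintype.card α : ℚ) - 1) * ((Fintype.card α : ℚ) - 2) ≠ 0 := by nlinarith
  convert mul_inv_cancel₀ hne using 2
  ring

lemma boundaryCoeff_uniformWeight_add_compl (h : 3 ≤ Fintype.card α) (T : Finset α) :
    boundaryCoeff (uniformWeight α) T + boundaryCoeff (uniformWeight α) Tᶜ =
      T.card * Tᶜ.card / ((Fintype.card α : ℚ) - 1) := by
  have hN : (3 : ℚ) ≤ Fintype.card α := by exact_mod_cast h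
  have key : ∀ S : Finset α, boundaryCoeff (uniformWeight α) S =
      S.card * (Sᶜ.card * (Sᶜ.card - 1)) /
        (((Fintype.card α : ℚ) - 1) * ((Fintype.card α : ℚ) - 2)) := by
    intro S
    have inner : ∀ i ∈ S, ∀ a ∈ Sᶜ, ∑ b ∈ Sᶜ, uniformWeight α i a b =
        (Sᶜ.card - 1) * (((Fintype.card α : ℚ) - 1) * ((Fintype.card α : ℚ) - 2))⁻¹ := by
      intro i hi a ha
      have hb : ∀ b ∈ Sᶜ, uniformWeight α i a b = if a ≠ b then
          (((Fintype.card α : ℚ) - 1) * ((Fintype.card α : ℚ) - 2))⁻¹ else 0 := by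
        intro b hb
        have hai : a ≠ i := by rintro rfl; exact mem_compl.1 ha hi
        have hbi : b ≠ i := by rintro rfl; exact mem_compl.1 hb hi
        simp [uniformWeight, hai, hbi]
      rw [sum_congr rfl hb, ← sum_filter, filter_ne, sum_const, card_erase_of_mem ha,
        nsmul_eq_mul, Nat.cast_sub (card_pos.2 ⟨a, ha⟩)]
      simp
    simp only [boundaryCoeff]
    rw [sum_congr rfl fun i hi => sum_congr rfl fun a ha => inner i hi a ha]
    simp only [sum_const, nsmul_eq_mul]
    ring
  have hcard : (T.card : ℚ) + Tᶜ.card = Fintype.card α := by exact_mod_cast card_add_card_compl T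
  have hne1 : (Fintype.card α : ℚ) - 1 ≠ 0 := by linarith
  have hne2 : (Fintype.card α : ℚ) - 2 ≠ 0 := by linarith
  rw [key, key, compl_compl, ← add_div, div_eq_div_iff (mul_ne_zero hne1 hne2) hne1,
    ← hcard]
  ring

end Weights

section Partition

variable {α : Type*} [Fintype α] [DecidableEq α] {P : Finpartition (univ : Finset α)}
  {π : α → α} {T : Finset α}

lemma Finpartition.part_subset_of_mem (hT : ∀ p ∈ P.parts, p ⊆ T ∨ p ⊆ Tᶜ) {i : α}
    (hi : i ∈ T) : P.part i ⊆ T :=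
  (hT _ (P.part_mem.2 (mem_univ i))).resolve_right
    fun h => mem_compl.1 (h (P.mem_part_self.2 (mem_univ i))) hi

lemma Finpartition.part_subset_compl_of_notMem (hT : ∀ p ∈ P.parts, p ⊆ T ∨ p ⊆ Tᶜ) {a : α}
    (ha : a ∉ T) : P.part a ⊆ Tᶜ :=
  (hT _ (P.part_mem.2 (mem_univ a))).resolve_left
    fun h => ha (h (P.mem_part_self.2 (mem_univ a)))

variable (P π) in
def partnerWeight (i a b : α) : ℚ :=
  if a ∉ P.part i ∧ b = π a then ((P.part i)ᶜ.card : ℚ)⁻¹ else 0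

lemma partnerWeight_nonneg (i a b : α) : 0 ≤ partnerWeight P π i a b := by
  unfold partnerWeight
  split_ifs <;> positivity

lemma isPsiFiber_partnerWeight (hπ : ∀ a, π a ∈ P.part a ∧ π a ≠ a) {i : α}
    (hi : P.part i ≠ univ) : IsPsiFiber i (partnerWeight P π i) := by
  refine ⟨fun a b hab => ?_, ?_⟩
  · unfold partnerWeight at hab
    obtain ⟨ha, rfl⟩ : a ∉ P.part i ∧ b = π a := by by_contra h; exact hab (if_neg h)
    have hai : a ≠ i := by rintro rfl; exact ha (P.mem_part_self.2 (mem_univ a))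
    refine ⟨hai, fun hπi => ha ?_, (hπ a).2.symm⟩
    rw [P.mem_part_iff_part_eq_part (mem_univ a) (mem_univ i), ← hπi]
    exact ((P.mem_part_iff_part_eq_part (mem_univ _) (mem_univ a)).1 (hπ a).1).symm
  · have hne : ((P.part i)ᶜ.card : ℚ) ≠ 0 := by
      simpa [compl_eq_empty_iff] using hi
    simp only [partnerWeight, ite_and]
    simp [sum_ite, filter_not, ← compl_eq_univ_sdiff, hne]

variable (P π) in
/-- The share `3/4` of the uniform weight alone gives `c_T + c_{Tᶜ} ≥ 3/4 · 4/3 = 1` on four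
points. -/
def mixedWeight (i : α) : α → α → ℚ :=
  if P.part i = univ then uniformWeight α i
  else (3 / 4 : ℚ) • uniformWeight α i + (1 / 4 : ℚ) • partnerWeight P π i

lemma isPsiFiber_mixedWeight (h : 3 ≤ Fintype.card α) (hπ : ∀ a, π a ∈ P.part a ∧ π a ≠ a)
    (i : α) : IsPsiFiber i (mixedWeight P π i) := by
  unfold mixedWeight
  split_ifs with hi
  · exact isPsiFiber_uniformWeight h i
  · exact (isPsiFiber_uniformWeight h i).add_smul (isPsiFiber_partnerWeight hπ hi) (by norm_num)

lemma three_quarters_mul_uniformWeight_le_mixedWeight (h : 3 ≤ Fintype.card α) (i a b : α) :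
    3 / 4 * uniformWeight α i a b ≤ mixedWeight P π i a b := by
  have hu := uniformWeight_nonneg h i a b
  unfold mixedWeight
  split_ifs
  · linarith
  · simp only [Pi.add_apply, Pi.smul_apply, smul_eq_mul]
    linarith [partnerWeight_nonneg (P := P) (π := π) i a b]

lemma boundaryCoeff_mixedWeight (hT : ∀ p ∈ P.parts, p ⊆ T ∨ p ⊆ Tᶜ) (hTc : Tᶜ.Nonempty) :
    boundaryCoeff (mixedWeight P π) T =
      3 / 4 * boundaryCoeff (uniformWeight α) T + 1 / 4 * boundaryCoeff (partnerWeight P π) T := by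
  simp only [boundaryCoeff, mul_sum, ← sum_add_distrib]
  refine sum_congr rfl fun i hi => ?_
  have hpart : P.part i ≠ univ := fun h =>
    hTc.ne_empty ((compl_eq_empty_iff _).2 (univ_subset_iff.1 (h ▸ P.part_subset_of_mem hT hi)))
  simp [mixedWeight, hpart]

lemma card_mul_card_compl_div_le_boundaryCoeff_partnerWeight
    (hP : ∀ p ∈ P.parts, 2 ≤ p.card) (hπ : ∀ a, π a ∈ P.part a)
    (hT : ∀ p ∈ P.parts, p ⊆ T ∨ p ⊆ Tᶜ) :
    T.card * Tᶜ.card / ((Fintype.card α : ℚ) - 2) ≤ boundaryCoeff (partnerWeight P π) T := by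
  have inner : ∀ i ∈ T, ∀ a ∈ Tᶜ,
      ((Fintype.card α : ℚ) - 2)⁻¹ ≤ ∑ b ∈ Tᶜ, partnerWeight P π i a b := by
    intro i hi a ha
    have hai : a ∉ P.part i := fun h => mem_compl.1 ha (P.part_subset_of_mem hT hi h)
    have hπa : π a ∈ Tᶜ := P.part_subset_compl_of_notMem hT (mem_compl.1 ha) (hπ a)
    simp only [partnerWeight, hai, not_false_eq_true, true_and, sum_ite_eq', hπa, if_true]
    have hpos : 0 < (P.part i)ᶜ.card := card_pos.2 ⟨a, mem_compl.2 hai⟩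
    have hle : (P.part i)ᶜ.card + 2 ≤ Fintype.card α := by
      rw [← card_compl_add_card (P.part i)]
      have := hP _ (P.part_mem.2 (mem_univ i))
      omega
    have : ((P.part i)ᶜ.card : ℚ) + 2 ≤ Fintype.card α := by exact_mod_cast hle
    exact inv_anti₀ (by exact_mod_cast hpos) (by linarith)
  calc (T.card * Tᶜ.card / ((Fintype.card α : ℚ) - 2))
      = ∑ i ∈ T, ∑ a ∈ Tᶜ, ((Fintype.card α : ℚ) - 2)⁻¹ := by
        simp only [sum_const, nsmul_eq_mul]; ring
    _ ≤ boundaryCoeff (partnerWeight P π) T := sum_le_sum fun i hi => sum_le_sum (inner i hi)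

lemma two_mul_card_sub_two_le_card_mul_card_compl (hT : 2 ≤ T.card) (hTc : 2 ≤ Tᶜ.card) :
    2 * ((Fintype.card α : ℚ) - 2) ≤ T.card * Tᶜ.card := by
  have hsum : (T.card : ℚ) + Tᶜ.card = Fintype.card α := by
    exact_mod_cast card_add_card_compl T
  have h1 : (2 : ℚ) ≤ T.card := by exact_mod_cast hT
  have h2 : (2 : ℚ) ≤ Tᶜ.card := by exact_mod_cast hTc
  nlinarith [mul_nonneg (sub_nonneg.2 h1) (sub_nonneg.2 h2)]

lemma three_quarters_mul_boundaryCoeff_uniformWeight_le (h : 3 ≤ Fintype.card α)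
    (T : Finset α) :
    3 / 4 * boundaryCoeff (uniformWeight α) T ≤ boundaryCoeff (mixedWeight P π) T := by
  simp only [boundaryCoeff, mul_sum]
  gcongr with i _ a _ b _
  exact three_quarters_mul_uniformWeight_le_mixedWeight h i a b

lemma one_le_three_quarters_mul_boundaryCoeff_uniformWeight_add_compl
    (h : 4 ≤ Fintype.card α) (hT : 2 ≤ T.card) (hTc : 2 ≤ Tᶜ.card) :
    1 ≤ 3 / 4 * (boundaryCoeff (uniformWeight α) T + boundaryCoeff (uniformWeight α) Tᶜ) := by
  have hN : (4 : ℚ) ≤ Fintype.card α := by exact_mod_cast h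
  rw [boundaryCoeff_uniformWeight_add_compl (by omega), mul_div_assoc', le_div_iff₀ (by linarith)]
  linarith [two_mul_card_sub_two_le_card_mul_card_compl hT hTc]

lemma one_le_boundaryCoeff_mixedWeight_add_compl (h : 4 ≤ Fintype.card α)
    (hT : 2 ≤ T.card) (hTc : 2 ≤ Tᶜ.card) :
    1 ≤ boundaryCoeff (mixedWeight P π) T + boundaryCoeff (mixedWeight P π) Tᶜ := by
  linarith [one_le_three_quarters_mul_boundaryCoeff_uniformWeight_add_compl h hT hTc,
    three_quarters_mul_boundaryCoeff_uniformWeight_le (P := P) (π := π) (by omega) T,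
    three_quarters_mul_boundaryCoeff_uniformWeight_le (P := P) (π := π) (by omega) Tᶜ]

lemma two_le_boundaryCoeff_mixedWeight_add_compl (h : 4 ≤ Fintype.card α)
    (hP : ∀ p ∈ P.parts, 2 ≤ p.card) (hπ : ∀ a, π a ∈ P.part a)
    (hT : 2 ≤ T.card) (hTc : 2 ≤ Tᶜ.card) (hsep : ∀ p ∈ P.parts, p ⊆ T ∨ p ⊆ Tᶜ) :
    2 ≤ boundaryCoeff (mixedWeight P π) T + boundaryCoeff (mixedWeight P π) Tᶜ := by
  have hsep' : ∀ p ∈ P.parts, p ⊆ Tᶜ ∨ p ⊆ Tᶜᶜ := by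
    simpa only [compl_compl, or_comm] using hsep
  have hN : (4 : ℚ) ≤ Fintype.card α := by exact_mod_cast h
  have hst : 2 ≤ T.card * Tᶜ.card / ((Fintype.card α : ℚ) - 2) := by
    rw [le_div_iff₀ (by linarith)]
    exact two_mul_card_sub_two_le_card_mul_card_compl hT hTc
  have hpT := card_mul_card_compl_div_le_boundaryCoeff_partnerWeight hP hπ hsep
  have hpTc := card_mul_card_compl_div_le_boundaryCoeff_partnerWeight hP hπ hsep'
  rw [compl_compl, mul_comm (Tᶜ.card : ℚ)] at hpTc
  rw [boundaryCoeff_mixedWeight hsep (card_pos.1 (by omega)),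
    boundaryCoeff_mixedWeight hsep' (by rw [compl_compl]; exact card_pos.1 (by omega))]
  linarith [one_le_three_quarters_mul_boundaryCoeff_uniformWeight_add_compl h hT hTc]

end Partition

section Kappa

lemma sum_mem_compl_compl_eq_sum_ite {α M : Type*} [Fintype α] [DecidableEq α]
    [AddCommMonoid M] (T : Finset α) (g : α → α → α → M) :
    ∑ i ∈ T, ∑ a ∈ Tᶜ, ∑ b ∈ Tᶜ, g i a b =
      ∑ i, ∑ a, ∑ b, if i ∈ T ∧ a ∉ T ∧ b ∉ T then g i a b else 0 := by
  simp only [ite_and, ← mem_compl, sum_ite_irrel, sum_const_zero, sum_ite_mem_eq]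

variable {n : ℕ}

lemma sum_smul_psi_eq_sum_boundaryCoeff_smul_delta (w : Fin n → Fin n → Fin n → ℚ) :
    ∑ i, ∑ a, ∑ b, w i a b • psi i a b = ∑ T, boundaryCoeff w T • delta T := by
  simp only [psi, boundaryCoeff, smul_sum, sum_filter, sum_smul, smul_ite, smul_zero,
    sum_mem_compl_compl_eq_sum_ite, ite_smul, zero_smul]
  rw [sum_comm (s := (univ : Finset (Finset (Fin n))))]
  refine sum_congr rfl fun i _ => ?_
  rw [sum_comm (s := (univ : Finset (Finset (Fin n))))]
  refine sum_congr rfl fun a _ => ?_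
  rw [sum_comm (s := (univ : Finset (Finset (Fin n))))]

lemma IsPsiFiber.sum_smul_psi {i a b : Fin n} {f : Fin n → Fin n → ℚ} (hf : IsPsiFiber i f)
    (ha : a ≠ i) (hb : b ≠ i) (hab : a ≠ b) :
    ∑ c, ∑ d, f c d • psi i c d = psi i a b := by
  have h : ∀ c d, f c d • psi i c d = f c d • psi i a b := by
    intro c d
    by_cases hcd : f c d = 0
    · simp [hcd]
    · obtain ⟨hc, hd, hcd⟩ := hf.1 c d hcd
      rw [psi_eq_psi hc hd hcd ha hb hab]
  simp only [h, ← sum_smul, hf.2, one_smul]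

lemma sum_boundaryCoeff_smul_delta_eq {w w' : Fin n → Fin n → Fin n → ℚ}
    (hw : ∀ i, IsPsiFiber i (w i)) (hw' : ∀ i, IsPsiFiber i (w' i)) :
    ∑ T, boundaryCoeff w T • delta T = ∑ T, boundaryCoeff w' T • delta T := by
  simp only [← sum_smul_psi_eq_sum_boundaryCoeff_smul_delta]
  refine sum_congr rfl fun i _ => ?_
  obtain ⟨a, -, hsum⟩ := exists_ne_zero_of_sum_ne_zero ((hw i).2.symm ▸ one_ne_zero)
  obtain ⟨b, -, hab⟩ := exists_ne_zero_of_sum_ne_zero hsum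
  obtain ⟨ha, hb, hab⟩ := (hw i).1 a b hab
  rw [(hw i).sum_smul_psi ha hb hab, (hw' i).sum_smul_psi ha hb hab]

/-- `κ = Σ_i ψ_i - δ`, with `Σ_i ψ_i` expanded in boundary classes through any choice of
weights. -/
lemma kappa_eq_sum_boundaryCoeff (hn : 3 ≤ n) {w : Fin n → Fin n → Fin n → ℚ}
    (hw : ∀ i, IsPsiFiber i (w i)) :
    kappa n = ∑ T, (if 2 ≤ T.card ∧ 2 ≤ Tᶜ.card then
      (boundaryCoeff w T + boundaryCoeff w Tᶜ) / 2 - 1 / 2 else 0) • delta T := by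
  have hU : ∀ i, IsPsiFiber i (uniformWeight (Fin n) i) :=
    isPsiFiber_uniformWeight (by simpa using hn)
  calc kappa n
      = ∑ T, ((boundaryCoeff (uniformWeight (Fin n)) T +
          boundaryCoeff (uniformWeight (Fin n)) Tᶜ) / 2 - 1 / 2) • delta T := by
        rw [kappa, smul_sum, sum_filter]
        simp only [smul_smul, ← ite_zero_smul]
        refine sum_smul_delta_congr fun T h1 h2 => ?_
        have ht : (Tᶜ.card : ℚ) = n - T.card := by
          rw [eq_sub_iff_add_eq, add_comm]
          exact_mod_cast (card_add_card_compl T).trans (Fintype.card_fin n)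
        rw [if_pos ⟨h1, h2⟩, boundaryCoeff_uniformWeight_add_compl (by simpa using hn), ht,
          Fintype.card_fin]
        ring
    _ = ∑ T, boundaryCoeff (uniformWeight (Fin n)) T • delta T - ∑ T, (1 / 2 : ℚ) • delta T := by
        simp only [sub_smul, sum_sub_distrib, ← sum_smul_delta_eq_sum_half_add_compl]
    _ = ∑ T, boundaryCoeff w T • delta T - ∑ T, (1 / 2 : ℚ) • delta T := by
        rw [sum_boundaryCoeff_smul_delta_eq hU hw]
    _ = _ := by
        simp only [sum_smul_delta_eq_sum_half_add_compl (boundaryCoeff w), ← sum_sub_distrib,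
          ← sub_smul]
        exact sum_smul_delta_congr fun T h1 h2 => (if_pos ⟨h1, h2⟩).symm

lemma kappa_add_half_smul_sum_eq (hn : 3 ≤ n) {w : Fin n → Fin n → Fin n → ℚ}
    (hw : ∀ i, IsPsiFiber i (w i)) (S : Finset (Fin n) → Prop) [DecidablePred S]
    (e : Finset (Fin n) → ℚ) :
    kappa n + (1 / 2 : ℚ) • ∑ T ∈ univ.filter (fun T : Finset (Fin n) =>
        2 ≤ T.card ∧ 2 ≤ Tᶜ.card ∧ S T), e T • delta T =
      ∑ T, (if 2 ≤ T.card ∧ 2 ≤ Tᶜ.card then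
        (boundaryCoeff w T + boundaryCoeff w Tᶜ) / 2 - 1 / 2 + (if S T then e T / 2 else 0)
        else 0) • delta T := by
  rw [kappa_eq_sum_boundaryCoeff hn hw, smul_sum, sum_filter, ← sum_add_distrib]
  refine sum_congr rfl fun T _ => ?_
  by_cases hT : 2 ≤ T.card ∧ 2 ≤ Tᶜ.card
  · by_cases hS : S T <;> simp [hT, hS, add_smul, smul_smul, div_eq_inv_mul]
  · have hT' : ¬(2 ≤ T.card ∧ 2 ≤ Tᶜ.card ∧ S T) := fun h => hT ⟨h.1, h.2.1⟩
    simp [hT, hT']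

end Kappa

theorem kappa_add_eff_general
    (n : ℕ) (hn : 4 ≤ n)
    (P : Finpartition (Finset.univ : Finset (Fin n)))
    (hP : ∀ p ∈ P.parts, 2 ≤ p.card)
    (e : Finset (Fin n) → ℚ)
    (he : ∀ T : Finset (Fin n), 2 ≤ T.card → 2 ≤ Tᶜ.card →
      (∀ p ∈ P.parts, p ⊆ T ∨ p ⊆ Tᶜ) → -1 ≤ e T) :
    IsEffectiveBoundary (kappa n +
      (1 / 2 : ℚ) • ∑ T ∈ univ.filter
          (fun T : Finset (Fin n) =>
            2 ≤ T.card ∧ 2 ≤ Tᶜ.card ∧ ∀ p ∈ P.parts, p ⊆ T ∨ p ⊆ Tᶜ),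
        e T • delta T) := by
  have hN : 4 ≤ Fintype.card (Fin n) := by simpa using hn
  choose π hπ using fun a => exists_mem_ne (hP _ (P.part_mem.2 (mem_univ a))) a
  refine ⟨_, fun T => ?_,
    kappa_add_half_smul_sum_eq (by omega) (isPsiFiber_mixedWeight (by omega) hπ) _ e⟩
  split_ifs with hT hsep
  · linarith [two_le_boundaryCoeff_mixedWeight_add_compl hN hP (fun a => (hπ a).1) hT.1 hT.2
      hsep, he T hT.1 hT.2 hsep]
  · linarith [one_le_boundaryCoeff_mixedWeight_add_compl (P := P) (π := π) hN hT.1 hT.2]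
  · rfl

/-- **Lemma 4.4 of Gibney–Keel–Morrison**: let `P` be a partition of `{1,…,n}`
each of whose classes has at least two elements, and for each unordered
partition `𝒯 = {T, Tᶜ}` with `|T|, |Tᶜ| ≥ 2` and `𝒯 > P`
(i.e. every class of `P` lies in `T` or in `Tᶜ`), let `e T` be
a rational number with `e T ≥ −1` (well defined on unordered partitions:
`e T = e Tᶜ`).  Then `κ_n + Σ_{𝒯 > P} e_𝒯 δ_T` is an effective boundary class.
(The sum over unordered partitions counted once is again written as half the
sum over ordered `T`.) -/
theorem kappa_add_eff
    (n : ℕ) (hn : 4 ≤ n)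
    (P : Finpartition (Finset.univ : Finset (Fin n)))
    (hP : ∀ p ∈ P.parts, 2 ≤ p.card)
    (e : Finset (Fin n) → ℚ)
    (hesymm : ∀ T : Finset (Fin n), 2 ≤ T.card → 2 ≤ Tᶜ.card →
      (∀ p ∈ P.parts, p ⊆ T ∨ p ⊆ Tᶜ) → e T = e Tᶜ)
    (he : ∀ T : Finset (Fin n), 2 ≤ T.card → 2 ≤ Tᶜ.card →
      (∀ p ∈ P.parts, p ⊆ T ∨ p ⊆ Tᶜ) → -1 ≤ e T) :
    IsEffectiveBoundary (kappa n +
      (1 / 2 : ℚ) • ∑ T ∈ univ.filter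
          (fun T : Finset (Fin n) =>
            2 ≤ T.card ∧ 2 ≤ Tᶜ.card ∧ ∀ p ∈ P.parts, p ⊆ T ∨ p ⊆ Tᶜ),
        e T • delta T) :=
  kappa_add_eff_general n hn P hP e he

end
end

section
/- Let n ≥ 4 be an integer. The element κ_n − δ̄_n of V_n is NOT an effective boundary class. (This is the assertion of the Remark following Lemma 4.4: κ − δ is not an effective sum of boundary divisors on \bar M_{0,n}, since as a symmetric expression the coefficient of B_2 is negative and there are no symmetric relations among boundary classes.) -/
open Finset

noncomputable section

/-- The total boundary class `δ = Σ δ_T`, the sum over unordered partitions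
`{T, Tᶜ}` of `{1,…,n}` with `|T|, |Tᶜ| ≥ 2`, each counted once (written as
half the sum over all such ordered `T`). -/
def deltaTotal (n : ℕ) : V n :=
  (1 / 2 : ℚ) • ∑ T ∈ univ.filter
      (fun T : Finset (Fin n) => 2 ≤ T.card ∧ 2 ≤ Tᶜ.card),
    delta T

/-! A linear functional on `V_n` that is nonnegative on every `δ_T` is nonnegative on the effective
cone. Symmetric functionals `δ_T ↦ g |T|` respect the relations as soon as `g` is invariant under
`k ↦ n − k` and vanishes on `0, 1`: the transposition of `j` and `k` exchanges the two sides of the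
four-point relation. Take `g` to be the indicator of `B₂` (`|T| = 2` or `|Tᶜ| = 2`). Every `δ_T`
in `B₂` has coefficient `2(n − 2)/(n − 1) − 1` in `κ` and `1` in `δ`, hence `−2/(n − 1) < 0` in
`κ − δ`, so this functional is negative on `κ − δ`. -/

section SymmetricFunctional

variable {n : ℕ} (g : ℕ → ℚ)

theorem sum_card_fourPoint_swap {i j k l : Fin n} (hij : i ≠ j) (hik : i ≠ k) (hjl : j ≠ l)
    (hkl : k ≠ l) :
    ∑ T ∈ univ.filter (fun T : Finset (Fin n) => i ∈ T ∧ j ∈ T ∧ k ∉ T ∧ l ∉ T), g T.card =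
      ∑ T ∈ univ.filter (fun T : Finset (Fin n) => i ∈ T ∧ k ∈ T ∧ j ∉ T ∧ l ∉ T), g T.card := by
  refine sum_equiv (Equiv.swap j k).finsetCongr (fun T => ?_) (fun T _ => ?_)
  · simp [Equiv.finsetCongr_apply, mem_map_equiv, Equiv.swap_apply_of_ne_of_ne,
      hij, hik, hjl.symm, hkl.symm]
  · simp [Equiv.finsetCongr_apply]

variable {g}

theorem relSub_le_ker_linearCombination_card (hcompl : ∀ k ≤ n, g (n - k) = g k)
    (hsmall : ∀ k ≤ 1, g k = 0) :
    relSub n ≤ LinearMap.ker (Finsupp.linearCombination ℚ fun T : Finset (Fin n) => g T.card) := by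
  rw [relSub, Submodule.span_le]
  rintro x (⟨T, rfl⟩ | ⟨T, hT, rfl⟩ | ⟨i, j, k, l, ⟨hij, hik, -, -, hjl, hkl⟩, rfl⟩)
  · simp [card_compl, hcompl _ (by simpa using card_le_univ T)]
  · simp [hsmall _ hT]
  · simp [map_sum, sum_card_fourPoint_swap g hij hik hjl hkl]

variable (g)

def cardFunctional (hcompl : ∀ k ≤ n, g (n - k) = g k) (hsmall : ∀ k ≤ 1, g k = 0) :
    V n →ₗ[ℚ] ℚ :=
  (relSub n).liftQ _ (relSub_le_ker_linearCombination_card hcompl hsmall)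

@[simp]
theorem cardFunctional_delta (hcompl : ∀ k ≤ n, g (n - k) = g k) (hsmall : ∀ k ≤ 1, g k = 0)
    (T : Finset (Fin n)) : cardFunctional g hcompl hsmall (delta T) = g T.card := by
  simp [cardFunctional, delta]

end SymmetricFunctional

theorem IsEffectiveBoundary.nonneg_of_forall_delta {n : ℕ} {x : V n} (hx : IsEffectiveBoundary x)
    (φ : V n →ₗ[ℚ] ℚ) (hφ : ∀ T, 0 ≤ φ (delta T)) : 0 ≤ φ x := by
  obtain ⟨c, hc, rfl⟩ := hx
  simpa only [map_sum, map_smul, smul_eq_mul] using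
    sum_nonneg fun T _ => mul_nonneg (hc T) (hφ T)

theorem kappa_sub_deltaTotal (n : ℕ) :
    kappa n - deltaTotal n = (1 / 2 : ℚ) •
      ∑ T ∈ univ.filter (fun T : Finset (Fin n) => 2 ≤ T.card ∧ 2 ≤ Tᶜ.card),
        ((T.card : ℚ) * (n - T.card) / (n - 1) - 2) • delta T := by
  rw [kappa, deltaTotal, ← smul_sub, ← sum_sub_distrib]
  congr 1
  refine sum_congr rfl fun T _ => ?_
  module

def bTwoIndicator (n k : ℕ) : ℚ :=
  if k = 2 ∨ k + 2 = n then 1 else 0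

section BTwo

variable {n : ℕ}

theorem bTwoIndicator_nonneg (k : ℕ) : 0 ≤ bTwoIndicator n k := by
  unfold bTwoIndicator
  positivity

theorem bTwoIndicator_sub : ∀ k ≤ n, bTwoIndicator n (n - k) = bTwoIndicator n k :=
  fun _ _ => if_congr (by omega) rfl rfl

theorem bTwoIndicator_of_le_one (hn : 4 ≤ n) : ∀ k ≤ 1, bTwoIndicator n k = 0 :=
  fun _ _ => if_neg (by omega)

theorem kappaCoeff_sub_two_mul_bTwoIndicator (hn : 1 < n) (k : ℕ) :
    ((k : ℚ) * (n - k) / (n - 1) - 2) * bTwoIndicator n k =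
      -(2 / (n - 1)) * bTwoIndicator n k := by
  have hn₁ : (n : ℚ) - 1 ≠ 0 := by
    rw [sub_ne_zero]
    exact_mod_cast hn.ne'
  simp only [bTwoIndicator]
  split_ifs with hk
  · obtain rfl | rfl := hk
    · field_simp
      ring
    · push_cast at hn₁ ⊢
      field_simp
      ring
  · simp

def bTwoFunctional (hn : 4 ≤ n) : V n →ₗ[ℚ] ℚ :=
  cardFunctional (bTwoIndicator n) bTwoIndicator_sub (bTwoIndicator_of_le_one hn)

theorem bTwoFunctional_delta_nonneg (hn : 4 ≤ n) (T : Finset (Fin n)) :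
    0 ≤ bTwoFunctional hn (delta T) := by
  simpa only [bTwoFunctional, cardFunctional_delta] using bTwoIndicator_nonneg T.card

theorem bTwoFunctional_kappa_sub_deltaTotal (hn : 4 ≤ n) :
    bTwoFunctional hn (kappa n - deltaTotal n) = -(1 / (n - 1)) *
      ∑ T ∈ univ.filter (fun T : Finset (Fin n) => 2 ≤ T.card ∧ 2 ≤ Tᶜ.card),
        bTwoIndicator n T.card := by
  simp only [kappa_sub_deltaTotal, map_smul, map_sum, bTwoFunctional, cardFunctional_delta,
    smul_eq_mul, kappaCoeff_sub_two_mul_bTwoIndicator (by omega : 1 < n), ← mul_sum]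
  ring

theorem bTwoFunctional_kappa_sub_deltaTotal_neg (hn : 4 ≤ n) :
    bTwoFunctional hn (kappa n - deltaTotal n) < 0 := by
  obtain ⟨T₂, -, hT₂⟩ := exists_subset_card_eq (s := (univ : Finset (Fin n))) (n := 2)
    (by simp only [card_univ, Fintype.card_fin]; omega)
  have hB₂ : 0 < ∑ T ∈ univ.filter (fun T : Finset (Fin n) => 2 ≤ T.card ∧ 2 ≤ Tᶜ.card),
      bTwoIndicator n T.card :=
    sum_pos' (fun T _ => bTwoIndicator_nonneg T.card)
      ⟨T₂, by simp [card_compl, hT₂]; omega, by simp [bTwoIndicator, hT₂]⟩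
  have hn₁ : (0 : ℚ) < n - 1 := by
    rw [sub_pos]
    exact_mod_cast (by omega : 1 < n)
  rw [bTwoFunctional_kappa_sub_deltaTotal, neg_mul, neg_lt_zero]
  exact mul_pos (one_div_pos.2 hn₁) hB₂

end BTwo

/-- **The Remark following Lemma 4.4 of Gibney–Keel–Morrison**: `κ − δ` is
*not* an effective sum of boundary divisors on `\bar M_{0,n}` (`n ≥ 4`), since
as a symmetric expression the coefficient of `B_2` is negative and there are
no symmetric relations among boundary classes. -/
theorem kappa_sub_delta_not_effective (n : ℕ) (hn : 4 ≤ n) :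
    ¬ IsEffectiveBoundary (kappa n - deltaTotal n) := fun hx =>
  (bTwoFunctional_kappa_sub_deltaTotal_neg hn).not_ge
    (hx.nonneg_of_forall_delta _ (bTwoFunctional_delta_nonneg hn))

end
end
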